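/- Let f : [0, ∞) → ℝ be continuous with f(0) = x, let a > 0, and let u ∈ (x − a, x). Denote by τ_u = inf{t > 0 : f(t) = u} the first hitting time of level u. Then the following are equivalent for t > 0: (i) T_D(a) = t, T_U(a) > t, and f(t) = u; (ii) τ_u = t and sup_{s ≤ t} f(s) = u + a. -/

import Mathlib

open Set ENNReal

noncomputable def DD (f : ℝ → ℝ) (t : ℝ) : ℝ := sSup (f '' Set.Icc 0 t) - f t
noncomputable def DU (f : ℝ → ℝ) (t : ℝ) : ℝ := f t - sInf (f '' Set.Icc 0 t)

/-- First time the process `g` hits level `a` (over `t ≥ 0`), with value `∞` if it never does. -/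
noncomputable def hitTime (g : ℝ → ℝ) (a : ℝ) : ℝ≥0∞ :=
  sInf {w : ℝ≥0∞ | ∃ t : ℝ, 0 ≤ t ∧ w = ENNReal.ofReal t ∧ g t = a}

/-- First hitting time `τ_u = inf {t > 0 : f t = u}`, with value `∞` if `f` never hits `u`. -/
noncomputable def tau (f : ℝ → ℝ) (u : ℝ) : ℝ≥0∞ :=
  sInf {w : ℝ≥0∞ | ∃ t : ℝ, 0 < t ∧ w = ENNReal.ofReal t ∧ f t = u}

/-!
The drawdown and the drawup are continuous and vanish at time `0`, so a level `a > 0` is hit no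
later than any time at which it is reached or exceeded. If the drawdown first hits `a` at `t` with
`f t = u`, then `max_{[0,t]} f = u + a`, attained at some `r`; an earlier visit `s < t` to `u` would
make the drawdown at `s` (if `r ≤ s`) or the drawup at `r` (if `s < r`) at least `a`, too early.
Conversely, if `t` is the first passage to `u < f 0`, then `f > u` on `[0, t)`: a drawdown of `a`
before `t` would need `f ≤ u` there, and a drawup of `a` by time `t` would need a value `u` before a
value `u + a`.
-/

lemma hitTime_eq_sInf_image (g : ℝ → ℝ) (a : ℝ) :
    hitTime g a = sInf (ENNReal.ofReal '' (Ici 0 ∩ g ⁻¹' {a})) := by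
  unfold hitTime
  congr 1
  ext w
  constructor
  · rintro ⟨s, hs, rfl, hgs⟩
    exact ⟨s, ⟨hs, hgs⟩, rfl⟩
  · rintro ⟨s, ⟨hs, hgs⟩, rfl⟩
    exact ⟨s, hs, rfl, hgs⟩

lemma tau_eq_hitTime {f : ℝ → ℝ} {u : ℝ} (hu : f 0 ≠ u) : tau f u = hitTime f u := by
  unfold tau hitTime
  congr 1
  ext w
  constructor
  · rintro ⟨s, hs, rfl, hfs⟩
    exact ⟨s, hs.le, rfl, hfs⟩
  · rintro ⟨s, hs, rfl, hfs⟩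
    exact ⟨s, hs.lt_of_ne (by rintro rfl; exact hu hfs), rfl, hfs⟩

section HittingTimes

variable {g : ℝ → ℝ} {a s t : ℝ}

lemma hitTime_le_ofReal (hs : 0 ≤ s) (h : g s = a) : hitTime g a ≤ ENNReal.ofReal s :=
  sInf_le ⟨s, hs, rfl, h⟩

lemma hitTime_eq_ofReal_of_isLeast (h : IsLeast (Ici 0 ∩ g ⁻¹' {a}) t) :
    hitTime g a = ENNReal.ofReal t := by
  rw [hitTime_eq_sInf_image]
  exact (ENNReal.ofReal_mono.map_isLeast h).csInf_eq

lemma exists_isLeast_Ici_inter_preimage (hg : ContinuousOn g (Ici 0))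
    (hne : (Ici 0 ∩ g ⁻¹' {a}).Nonempty) : ∃ m, IsLeast (Ici 0 ∩ g ⁻¹' {a}) m :=
  ⟨_, (hg.preimage_isClosed_of_isClosed isClosed_Ici isClosed_singleton).isLeast_csInf hne
    ⟨0, fun _ hs => hs.1⟩⟩

lemma hitTime_eq_top_of_empty (h : Ici 0 ∩ g ⁻¹' {a} = ∅) : hitTime g a = ⊤ := by
  rw [hitTime_eq_sInf_image, h, image_empty, sInf_empty]

lemma hitTime_eq_ofReal_iff (hg : ContinuousOn g (Ici 0)) (ht : 0 ≤ t) :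
    hitTime g a = ENNReal.ofReal t ↔ IsLeast (Ici 0 ∩ g ⁻¹' {a}) t := by
  refine ⟨fun h => ?_, hitTime_eq_ofReal_of_isLeast⟩
  rcases (Ici 0 ∩ g ⁻¹' {a}).eq_empty_or_nonempty with hemp | hne
  · simp [hitTime_eq_top_of_empty hemp] at h
  · obtain ⟨m, hm⟩ := exists_isLeast_Ici_inter_preimage hg hne
    rw [hitTime_eq_ofReal_of_isLeast hm, ENNReal.ofReal_eq_ofReal_iff hm.1.1 ht] at h
    exact h ▸ hm

lemma ofReal_lt_hitTime_iff (hg : ContinuousOn g (Ici 0)) (ht : 0 ≤ t) :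
    ENNReal.ofReal t < hitTime g a ↔ ∀ s ∈ Icc 0 t, g s ≠ a := by
  refine ⟨fun h s hs hgs => ?_, fun h => ?_⟩
  · exact (h.trans_le (hitTime_le_ofReal hs.1 hgs)).not_ge (ENNReal.ofReal_le_ofReal hs.2)
  rcases (Ici 0 ∩ g ⁻¹' {a}).eq_empty_or_nonempty with hemp | hne
  · simp [hitTime_eq_top_of_empty hemp]
  · obtain ⟨m, hm⟩ := exists_isLeast_Ici_inter_preimage hg hne
    have htm : t < m := lt_of_not_ge fun hmt => h m ⟨hm.1.1, hmt⟩ hm.1.2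
    rw [hitTime_eq_ofReal_of_isLeast hm, ENNReal.ofReal_lt_ofReal_iff (ht.trans_lt htm)]
    exact htm

lemma hitTime_le_ofReal_of_mem_uIcc (hg : ContinuousOn g (Ici 0)) (hs : 0 ≤ s)
    (h : a ∈ uIcc (g 0) (g s)) : hitTime g a ≤ ENNReal.ofReal s := by
  have hIcc : uIcc 0 s = Icc 0 s := uIcc_of_le hs
  obtain ⟨r, hr, hgr⟩ := intermediate_value_uIcc (hg.mono (hIcc ▸ Icc_subset_Ici_self)) h
  rw [hIcc] at hr
  exact (hitTime_le_ofReal hr.1 hgr).trans (ENNReal.ofReal_le_ofReal hr.2)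

end HittingTimes

section RunningExtrema

variable {α : Type*} [ConditionallyCompleteLinearOrder α] [TopologicalSpace α] [OrderTopology α]

/-- Rescaling `[0, t]` to `[0, 1]` makes the running supremum a supremum of a jointly continuous
function over a fixed compact set. -/
lemma continuousOn_sSup_image_Icc_zero {f : ℝ → α} (hf : ContinuousOn f (Ici 0)) :
    ContinuousOn (fun t => sSup (f '' Icc 0 t)) (Ici 0) := by
  set F : ℝ → ℝ → α := fun t r => f (max (t * r) 0)
  have hF : Continuous ↿F :=
    hf.comp_continuous (by fun_prop) fun _ => mem_Ici.2 (le_max_right _ _)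
  refine ((isCompact_Icc (a := 0) (b := 1)).continuous_sSup hF).continuousOn.congr
    fun t (ht : 0 ≤ t) => ?_
  have hIcc : Icc 0 t = (t * ·) '' Icc 0 1 := by
    rw [image_mul_left_Icc ht zero_le_one, mul_zero, mul_one]
  rw [hIcc, image_image]
  refine congrArg sSup (image_congr fun r hr => ?_)
  simp only [F, max_eq_left (mul_nonneg ht hr.1)]

lemma continuousOn_sInf_image_Icc_zero {f : ℝ → α} (hf : ContinuousOn f (Ici 0)) :
    ContinuousOn (fun t => sInf (f '' Icc 0 t)) (Ici 0) :=
  continuousOn_sSup_image_Icc_zero (α := αᵒᵈ) hf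

end RunningExtrema

section Drawdown

variable {f : ℝ → ℝ}

lemma DD_zero : DD f 0 = 0 := by
  rw [DD, Icc_self, image_singleton, csSup_singleton, sub_self]

lemma DU_zero : DU f 0 = 0 := by
  rw [DU, Icc_self, image_singleton, csInf_singleton, sub_self]

lemma continuousOn_DD (hf : ContinuousOn f (Ici 0)) : ContinuousOn (DD f) (Ici 0) :=
  (continuousOn_sSup_image_Icc_zero hf).sub hf

lemma continuousOn_DU (hf : ContinuousOn f (Ici 0)) : ContinuousOn (DU f) (Ici 0) :=
  hf.sub (continuousOn_sInf_image_Icc_zero hf)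

lemma sub_le_DD (hf : ContinuousOn f (Ici 0)) {r s : ℝ} (hr : 0 ≤ r) (hrs : r ≤ s) :
    f r - f s ≤ DD f s :=
  sub_le_sub_right ((hf.mono Icc_subset_Ici_self).le_sSup_image_Icc ⟨hr, hrs⟩) _

lemma sub_le_DU (hf : ContinuousOn f (Ici 0)) {r s : ℝ} (hs : 0 ≤ s) (hsr : s ≤ r) :
    f r - f s ≤ DU f r :=
  sub_le_sub_left ((hf.mono Icc_subset_Ici_self).sInf_image_Icc_le ⟨hs, hsr⟩) _

lemma tau_eq_and_sSup_eq_of_hitTime_DD_eq (hf : ContinuousOn f (Ici 0)) {a u t : ℝ}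
    (ha : 0 ≤ a) (hu : f 0 ≠ u) (ht : 0 ≤ t) (hD : hitTime (DD f) a = ENNReal.ofReal t)
    (hU : ENNReal.ofReal t < hitTime (DU f) a) (hft : f t = u) :
    tau f u = ENNReal.ofReal t ∧ sSup (f '' Icc 0 t) = u + a := by
  have hDt : DD f t = a := ((hitTime_eq_ofReal_iff (continuousOn_DD hf) ht).1 hD).1.2
  have hsup : sSup (f '' Icc 0 t) = u + a := by rw [DD, hft] at hDt; linarith
  refine ⟨?_, hsup⟩
  rw [tau_eq_hitTime hu]
  refine hitTime_eq_ofReal_of_isLeast ⟨⟨ht, hft⟩, fun s ⟨hs, hfs⟩ => le_of_not_gt fun hst => ?_⟩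
  obtain ⟨r, hr, hfr⟩ := isCompact_Icc.exists_sSup_image_eq (nonempty_Icc.2 ht)
    (hf.mono Icc_subset_Ici_self)
  rcases le_or_gt r s with hrs | hsr
  · have hDs : a ≤ DD f s := by
      have := sub_le_DD hf hr.1 hrs
      rw [← hfr, hsup, show f s = u from hfs] at this
      linarith
    have := hD ▸ hitTime_le_ofReal_of_mem_uIcc (continuousOn_DD hf) hs
      (by rw [DD_zero]; exact mem_uIcc_of_le ha hDs)
    exact hst.not_ge ((ENNReal.ofReal_le_ofReal_iff hs).1 this)
  · have hUr : a ≤ DU f r := by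
      have := sub_le_DU hf hs hsr.le
      rw [← hfr, hsup, show f s = u from hfs] at this
      linarith
    have := hitTime_le_ofReal_of_mem_uIcc (continuousOn_DU hf) hr.1
      (by rw [DU_zero]; exact mem_uIcc_of_le ha hUr)
    exact hU.not_ge (this.trans (ENNReal.ofReal_le_ofReal hr.2))

lemma hitTime_DD_eq_and_lt_hitTime_DU_of_tau_eq (hf : ContinuousOn f (Ici 0)) {a u t : ℝ}
    (ha : 0 < a) (hu : u < f 0) (ht : 0 ≤ t) (hτ : tau f u = ENNReal.ofReal t)
    (hsup : sSup (f '' Icc 0 t) = u + a) :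
    hitTime (DD f) a = ENNReal.ofReal t ∧ ENNReal.ofReal t < hitTime (DU f) a ∧ f t = u := by
  rw [tau_eq_hitTime hu.ne'] at hτ
  have hft : f t = u := ((hitTime_eq_ofReal_iff hf ht).1 hτ).1.2
  have hgt : ∀ s ∈ Ico 0 t, u < f s := fun s hs => lt_of_not_ge fun hfs =>
    hs.2.not_ge <| (ENNReal.ofReal_le_ofReal_iff hs.1).1 <|
      hτ ▸ hitTime_le_ofReal_of_mem_uIcc hf hs.1 (mem_uIcc_of_ge hfs hu.le)
  have hle : ∀ s ∈ Icc 0 t, f s ≤ u + a := fun s hs =>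
    hsup ▸ (hf.mono Icc_subset_Ici_self).le_sSup_image_Icc hs
  refine ⟨hitTime_eq_ofReal_of_isLeast ⟨⟨ht, ?_⟩, fun s ⟨hs, hDs⟩ => ?_⟩, ?_, hft⟩
  · simp [DD, hsup, hft]
  · refine le_of_not_gt fun hst => (hgt s ⟨hs, hst⟩).not_ge ?_
    have hmono : sSup (f '' Icc 0 s) ≤ u + a := hsup ▸ csSup_le_csSup
      (isCompact_Icc.bddAbove_image (hf.mono Icc_subset_Ici_self))
      ((nonempty_Icc.2 hs).image f) (image_mono (Icc_subset_Icc_right hst.le))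
    simp only [mem_preimage, mem_singleton_iff, DD] at hDs
    linarith
  · refine (ofReal_lt_hitTime_iff (continuousOn_DU hf) ht).2 fun s hs hUs => ?_
    obtain ⟨r, hr, hfr⟩ := isCompact_Icc.exists_sInf_image_eq (nonempty_Icc.2 hs.1)
      (hf.mono Icc_subset_Ici_self)
    rw [DU, hfr] at hUs
    rcases (hr.2.trans hs.2).lt_or_eq with hrt | rfl
    · linarith [hgt r ⟨hr.1, hrt⟩, hle s hs]
    · rw [le_antisymm hs.2 hr.2, sub_self] at hUs
      exact ha.ne hUs

end Drawdown

theorem stmt_3 (f : ℝ → ℝ) (x : ℝ) (hf : ContinuousOn f (Set.Ici 0)) (hx : f 0 = x)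
    (a : ℝ) (ha : 0 < a) (u : ℝ) (hu : u ∈ Set.Ioo (x - a) x) (t : ℝ) (ht : 0 < t) :
    (hitTime (DD f) a = ENNReal.ofReal t ∧ ENNReal.ofReal t < hitTime (DU f) a ∧ f t = u)
      ↔ (tau f u = ENNReal.ofReal t ∧ sSup (f '' Set.Icc 0 t) = u + a) := by
  subst hx
  exact ⟨fun ⟨hD, hU, hft⟩ => tau_eq_and_sSup_eq_of_hitTime_DD_eq hf ha.le hu.2.ne' ht.le hD hU hft,
    fun ⟨hτ, hsup⟩ => hitTime_DD_eq_and_lt_hitTime_DU_of_tau_eq hf ha hu.2 ht.le hτ hsup⟩
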